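/- Let J be a finite set of natural numbers, let k ∈ J and let l ∉ J with k ≠ l. Then ε(l, J) · ε(k, (J \ {k}) ∪ {l}) = − ε(l, J \ {k}) · ε(k, J \ {k}). -/

import Mathlib

/-- The insertion sign `ε(m, K) = (−1)^{#{k ∈ K : k < m}}`: the sign of the permutation
sorting the multi-index obtained by prepending `m` to the increasing enumeration of `K`. -/
def insertionSign (m : ℕ) (K : Finset ℕ) : ℤ :=
  (-1) ^ (K.filter (fun k => k < m)).card

/-! Writing `J = {k} ∪ K` and `K ∪ {l}` with `K = J \ {k}`, the insertion sign is multiplicative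
in the set, so both sides share the factor `ε(l, K) ε(k, K)`; what is left is
`ε(l, {k}) ε(k, {l}) = −1`, since exactly one of `k < l`, `l < k` holds. -/

theorem insertionSign_union {A B : Finset ℕ} (h : Disjoint A B) (m : ℕ) :
    insertionSign m (A ∪ B) = insertionSign m A * insertionSign m B := by
  unfold insertionSign
  rw [Finset.filter_union, Finset.card_union_of_disjoint (Finset.disjoint_filter_filter h),
    pow_add]

theorem insertionSign_singleton_mul_insertionSign_singleton {k l : ℕ} (hkl : k ≠ l) :
    insertionSign l {k} * insertionSign k {l} = -1 := by
  unfold insertionSign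
  rw [Finset.filter_singleton, Finset.filter_singleton]
  rcases hkl.lt_or_gt with h | h <;> simp [h, h.not_gt]

/-- For `k ∈ J`, `l ∉ J`, `k ≠ l`:
`ε(l, J) · ε(k, (J \ {k}) ∪ {l}) = − ε(l, J \ {k}) · ε(k, J \ {k})`. -/
theorem insertionSign_relation (J : Finset ℕ) (k l : ℕ)
    (hk : k ∈ J) (hl : l ∉ J) (hkl : k ≠ l) :
    insertionSign l J * insertionSign k ((J \ {k}) ∪ {l}) =
      - (insertionSign l (J \ {k}) * insertionSign k (J \ {k})) := by
  have hJ : J = {k} ∪ (J \ {k}) :=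
    (Finset.union_sdiff_of_subset (Finset.singleton_subset_iff.2 hk)).symm
  have hl_sign : insertionSign l J = insertionSign l {k} * insertionSign l (J \ {k}) := by
    rw [← insertionSign_union Finset.disjoint_sdiff, ← hJ]
  have hk_sign : insertionSign k ((J \ {k}) ∪ {l}) =
      insertionSign k (J \ {k}) * insertionSign k {l} :=
    insertionSign_union (Finset.disjoint_singleton_right.2 fun h => hl (Finset.sdiff_subset h)) k
  rw [hl_sign, hk_sign]
  linear_combination (insertionSign l (J \ {k}) * insertionSign k (J \ {k})) *
    insertionSign_singleton_mul_insertionSign_singleton hkl
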